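/- Let n ≥ 1. Every polynomial R ∈ ℚ[x,y] that is weighted homogeneous of degree n+3, lies in the ideal (h_{n+1}, h_{n+2}), and lies in the ideal (y²), is a ℚ-scalar multiple of y²·h_{n−1}. -/

import Mathlib

/-!
Write `R = P h_{n+1} + Q h_{n+2}`. Comparing weighted components, `P` and `Q` may be replaced by
their components of degree `2` and `1`, i.e. `P = a x² + b y` and `Q = e x`. The identity
`y² h_{n-1} = (x² - y) h_{n+1} - x h_{n+2}` turns this into
`R = (a + e) h_{n+3} + (2a + b + e) y h_{n+1} + a y² h_{n-1}`, and since `h_k(x, 0) = x^k`,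
divisibility of `R` by `y²` kills the first two coefficients.
-/

open MvPolynomial

/-- The complete homogeneous symmetric polynomial of degree `k` in two variables,
expressed in the elementary symmetric polynomials `x = X 0`, `y = X 1`. -/
noncomputable def h : ℕ → MvPolynomial (Fin 2) ℚ
  | 0 => 1
  | 1 => X 0
  | (k + 2) => X 0 * h (k + 1) - X 1 * h k

namespace MvPolynomial

variable {σ R M : Type*} [CommSemiring R] [AddCancelCommMonoid M] {w : σ → M}

theorem weightedHomogeneousComponent_mul_of_isWeightedHomogeneous_right {q : MvPolynomial σ R}
    {i j k : M} (hq : q.IsWeightedHomogeneous w j) (hk : i + j = k) (p : MvPolynomial σ R) :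
    weightedHomogeneousComponent w k (p * q) = weightedHomogeneousComponent w i p * q := by
  classical
  let _ := weightedGradedAlgebra R w
  subst hk
  simp_rw [← weightedDecomposition.decompose'_apply]
  exact DirectSum.coe_decompose_mul_add_of_right_mem _ hq

theorem IsWeightedHomogeneous.eq_sum_monomial_coeff {p : MvPolynomial σ R} {m : M}
    (hp : p.IsWeightedHomogeneous w m) {s : Finset (σ →₀ ℕ)}
    (hs : ∀ d, Finsupp.weight w d = m → d ∈ s) :
    p = ∑ d ∈ s, monomial d (coeff d p) := by
  conv_lhs => rw [p.as_sum]
  refine Finset.sum_subset (fun d hd ↦ hs d (hp (mem_support_iff.mp hd))) fun d _ hd ↦ ?_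
  rw [notMem_support_iff.mp hd, monomial_zero]

end MvPolynomial

lemma weight_one_two (d : Fin 2 →₀ ℕ) : Finsupp.weight ![1, 2] d = d 0 + 2 * d 1 := by
  simp [Finsupp.weight_apply, Finsupp.sum_fintype, Fin.sum_univ_two, mul_comm]

lemma finsupp_fin_two_eq (d : Fin 2 →₀ ℕ) :
    d = Finsupp.single 0 (d 0) + Finsupp.single 1 (d 1) := by
  ext i; fin_cases i <;> simp

lemma exists_eq_C_mul_X_zero_of_isWeightedHomogeneous_one {p : MvPolynomial (Fin 2) ℚ}
    (hp : p.IsWeightedHomogeneous ![1, 2] 1) : ∃ e : ℚ, p = C e * X 0 := by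
  refine ⟨coeff (Finsupp.single 0 1) p,
    (hp.eq_sum_monomial_coeff (s := {Finsupp.single 0 1}) fun d hd ↦ ?_).trans ?_⟩
  · rw [weight_one_two] at hd
    rw [finsupp_fin_two_eq d, show d 0 = 1 by omega, show d 1 = 0 by omega]
    simp
  · rw [Finset.sum_singleton, ← C_mul_X_pow_eq_monomial, pow_one]

lemma exists_eq_C_mul_X_zero_sq_add_C_mul_X_one_of_isWeightedHomogeneous_two
    {p : MvPolynomial (Fin 2) ℚ} (hp : p.IsWeightedHomogeneous ![1, 2] 2) :
    ∃ a b : ℚ, p = C a * X 0 ^ 2 + C b * X 1 := by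
  refine ⟨coeff (Finsupp.single 0 2) p, coeff (Finsupp.single 1 1) p,
    (hp.eq_sum_monomial_coeff (s := {Finsupp.single 0 2, Finsupp.single 1 1})
    fun d hd ↦ ?_).trans ?_⟩
  · rw [weight_one_two] at hd
    rw [finsupp_fin_two_eq d]
    rcases (by omega : d 0 = 2 ∧ d 1 = 0 ∨ d 0 = 0 ∧ d 1 = 1) with ⟨h0, h1⟩ | ⟨h0, h1⟩ <;>
      simp [h0, h1]
  · rw [Finset.sum_pair (by simp [Finsupp.single_eq_single_iff]), ← C_mul_X_pow_eq_monomial,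
      ← C_mul_X_pow_eq_monomial, pow_one]

lemma h_add_two (k : ℕ) : h (k + 2) = X 0 * h (k + 1) - X 1 * h k := rfl

lemma isWeightedHomogeneous_h : ∀ k, (h k).IsWeightedHomogeneous ![1, 2] k
  | 0 => isWeightedHomogeneous_one ℚ _
  | 1 => by simpa [h] using isWeightedHomogeneous_X ℚ ![1, 2] 0
  | k + 2 => by
    have hx : (X 0 : MvPolynomial (Fin 2) ℚ).IsWeightedHomogeneous ![1, 2] 1 := by
      simpa using isWeightedHomogeneous_X ℚ ![1, 2] 0
    have hy : (X 1 : MvPolynomial (Fin 2) ℚ).IsWeightedHomogeneous ![1, 2] 2 := by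
      simpa using isWeightedHomogeneous_X ℚ ![1, 2] 1
    rw [h_add_two]
    have hxh := hx.mul (isWeightedHomogeneous_h (k + 1))
    have hyh := hy.mul (isWeightedHomogeneous_h k)
    rw [show 1 + (k + 1) = k + 2 by omega] at hxh
    rw [add_comm] at hyh
    exact hxh.sub hyh

lemma aeval_h_X_one_zero : ∀ k, aeval ![X 0, (0 : MvPolynomial (Fin 2) ℚ)] (h k) = X 0 ^ k
  | 0 => by simp [h]
  | 1 => by simp [h]
  | k + 2 => by
    rw [h_add_two, map_sub, map_mul, map_mul, aeval_h_X_one_zero (k + 1), aeval_h_X_one_zero k]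
    simp [pow_succ']

lemma eq_zero_of_X_one_dvd_C_mul_h {c : ℚ} {k : ℕ} (hdvd : X 1 ∣ C c * h k) : c = 0 := by
  have := map_dvd (aeval ![X 0, (0 : MvPolynomial (Fin 2) ℚ)]) hdvd
  rw [map_mul, aeval_C, aeval_h_X_one_zero, aeval_X] at this
  simpa [X_ne_zero] using this

lemma X_one_sq_mul_h (k : ℕ) :
    X 1 ^ 2 * h k = (X 0 ^ 2 - X 1) * h (k + 2) - X 0 * h (k + 3) := by
  rw [h_add_two (k + 1), h_add_two k]; ring

lemma eq_zero_of_X_one_sq_dvd {α β : ℚ} {k : ℕ}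
    (hdvd : X 1 ^ 2 ∣ C α * h (k + 2) + C β * (X 1 * h k)) : α = 0 ∧ β = 0 := by
  have hα : α = 0 := by
    refine eq_zero_of_X_one_dvd_C_mul_h ((dvd_add_left ?_).mp
      ((dvd_pow_self _ two_ne_zero).trans hdvd))
    exact dvd_mul_of_dvd_right (dvd_mul_right _ _) _
  refine ⟨hα, eq_zero_of_X_one_dvd_C_mul_h (k := k) ?_⟩
  rw [hα, C_0, zero_mul, zero_add, mul_left_comm, pow_two] at hdvd
  exact (mul_dvd_mul_iff_left (X_ne_zero 1)).mp hdvd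

/-- Every weighted homogeneous polynomial of degree `n+3` (with `deg x = 1`, `deg y = 2`)
lying both in the ideal `(h_{n+1}, h_{n+2})` and in the ideal `(y²)` is a scalar multiple
of `y²·h_{n−1}`. -/
theorem stmt8 (n : ℕ) (hn : 1 ≤ n) (R : MvPolynomial (Fin 2) ℚ)
    (hR : R.IsWeightedHomogeneous ![1, 2] (n + 3))
    (hI : R ∈ (Ideal.span {h (n + 1), h (n + 2)} : Ideal (MvPolynomial (Fin 2) ℚ)))
    (hy : R ∈ (Ideal.span {X 1 ^ 2} : Ideal (MvPolynomial (Fin 2) ℚ))) :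
    ∃ c : ℚ, R = C c * (X 1 ^ 2 * h (n - 1)) := by
  obtain ⟨m, rfl⟩ := Nat.exists_eq_add_of_le' hn
  obtain ⟨P, Q, hPQ⟩ := Ideal.mem_span_pair.mp hI
  have hR' : R = weightedHomogeneousComponent ![1, 2] 2 P * h (m + 2)
      + weightedHomogeneousComponent ![1, 2] 1 Q * h (m + 3) := by
    rw [← hR.weightedHomogeneousComponent_same, ← hPQ, map_add,
      weightedHomogeneousComponent_mul_of_isWeightedHomogeneous_right (isWeightedHomogeneous_h _)
        (by omega : 2 + (m + 1 + 1) = m + 1 + 3),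
      weightedHomogeneousComponent_mul_of_isWeightedHomogeneous_right (isWeightedHomogeneous_h _)
        (by omega : 1 + (m + 1 + 2) = m + 1 + 3)]
  obtain ⟨a, b, ha⟩ := exists_eq_C_mul_X_zero_sq_add_C_mul_X_one_of_isWeightedHomogeneous_two
    (weightedHomogeneousComponent_isWeightedHomogeneous 2 P)
  obtain ⟨e, he⟩ := exists_eq_C_mul_X_zero_of_isWeightedHomogeneous_one
    (weightedHomogeneousComponent_isWeightedHomogeneous 1 Q)
  have hdecomp : R = (C (a + e) * h (m + 2 + 2) + C (2 * a + b + e) * (X 1 * h (m + 2)))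
      + C a * (X 1 ^ 2 * h m) := by
    rw [hR', ha, he, X_one_sq_mul_h, h_add_two (m + 2)]
    simp only [C_add, C_mul, map_ofNat]
    ring
  obtain ⟨hα, hβ⟩ := eq_zero_of_X_one_sq_dvd ((dvd_add_left (dvd_mul_of_dvd_right
    (dvd_mul_right _ _) _)).mp (hdecomp ▸ Ideal.mem_span_singleton.mp hy))
  exact ⟨a, by rw [hdecomp, hα, hβ]; simp⟩
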